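/- Let 0 < R ≤ π/2 (equivalently λ ≤ 1 where R = λπ/2). Then there is no C^∞ solution u of the translating soliton equation on the strip S_R := {(x₁,x₂) ∈ ℝ² : |x₁| < R} whose Hessian D²u is positive definite at every point and which satisfies u(x₁,x₂) → +∞ as |x₁| → R for each fixed x₂. -/

import Mathlib

open Real Filter

noncomputable def pd1 (f : ℝ × ℝ → ℝ) (p : ℝ × ℝ) : ℝ := fderiv ℝ f p (1, 0)

noncomputable def pd2 (f : ℝ × ℝ → ℝ) (p : ℝ × ℝ) : ℝ := fderiv ℝ f p (0, 1)

/-- The translating soliton equation in nondivergence form. -/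
def IsSolitonAt (u : ℝ × ℝ → ℝ) (p : ℝ × ℝ) : Prop :=
  (1 + (pd2 u p) ^ 2) * pd1 (pd1 u) p
    - 2 * pd1 u p * pd2 u p * pd2 (pd1 u) p
    + (1 + (pd1 u p) ^ 2) * pd2 (pd2 u) p
  = 1 + (pd1 u p) ^ 2 + (pd2 u p) ^ 2

/-- Positive definiteness of the Hessian of `u` at `p` (local strict convexity). -/
def HessPosDef (u : ℝ × ℝ → ℝ) (p : ℝ × ℝ) : Prop :=
  ∀ v : ℝ × ℝ, v ≠ 0 →
    0 < pd1 (pd1 u) p * v.1 ^ 2 + 2 * pd2 (pd1 u) p * v.1 * v.2 + pd2 (pd2 u) p * v.2 ^ 2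

/-- Algebraic key step: if the quadratic form `A x² + 2Bxy + C y²` is positive definite and
`(1+b²)A - 2abB + (1+a²)C = 1+a²+b²`, then `0 < A < 1+a²`. -/
lemma alg_key (A B C a b : ℝ)
    (hQ : ∀ v : ℝ × ℝ, v ≠ 0 → 0 < A * v.1 ^ 2 + 2 * B * v.1 * v.2 + C * v.2 ^ 2)
    (hEq : (1 + b ^ 2) * A - 2 * a * b * B + (1 + a ^ 2) * C = 1 + a ^ 2 + b ^ 2) :
    0 < A ∧ A < 1 + a ^ 2 := by
  have h1 := hQ (1, 0) (by simp [Prod.ext_iff])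
  simp only at h1
  have hA : 0 < A := by nlinarith [h1]
  have hv : ((-(a * b), 1 + a ^ 2) : ℝ × ℝ) ≠ 0 := by
    intro hcon
    have : (1 : ℝ) + a ^ 2 = 0 := congrArg Prod.snd hcon
    nlinarith [sq_nonneg a]
  have h2 := hQ (-(a * b), 1 + a ^ 2) hv
  simp only at h2
  have e2 : (1 + a ^ 2) * ((1 + b ^ 2) * A - 2 * a * b * B + (1 + a ^ 2) * C)
      = (1 + a ^ 2) * (1 + a ^ 2 + b ^ 2) := by rw [hEq]
  have key : A * (1 + a ^ 2 + b ^ 2) < (1 + a ^ 2) * (1 + a ^ 2 + b ^ 2) := by nlinarith [h2, e2]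
  have hs : (0 : ℝ) < 1 + a ^ 2 + b ^ 2 := by positivity
  exact ⟨hA, lt_of_mul_lt_mul_right key hs.le⟩

/-- If `0 < R ≤ π/2` (i.e. `λ ≤ 1`), there is no complete locally strictly
convex smooth graphical translating soliton over the strip `S_R = {|x₁| < R}`. -/
theorem no_strictly_convex_soliton_in_narrow_strip (R : ℝ) (hR : 0 < R) (hR' : R ≤ π / 2) :
    ¬ ∃ u : ℝ × ℝ → ℝ,
      ContDiffOn ℝ (⊤ : ℕ∞) u {p : ℝ × ℝ | |p.1| < R} ∧
      (∀ p : ℝ × ℝ, |p.1| < R → HessPosDef u p) ∧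
      (∀ p : ℝ × ℝ, |p.1| < R → IsSolitonAt u p) ∧
      (∀ x₂ : ℝ,
        Tendsto (fun x₁ : ℝ => u (x₁, x₂)) (nhdsWithin R (Set.Iio R)) atTop) ∧
      (∀ x₂ : ℝ,
        Tendsto (fun x₁ : ℝ => u (x₁, x₂)) (nhdsWithin (-R) (Set.Ioi (-R))) atTop) := by
  rintro ⟨u, hu, hHess, hSol, hTop, hBot⟩
  have hopen : IsOpen {p : ℝ × ℝ | |p.1| < R} :=
    isOpen_lt (continuous_abs.comp continuous_fst) continuous_const
  set I : Set ℝ := Set.Ioo (-R) R with hI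
  set f1 : ℝ → ℝ := fun x => pd1 u (x, 0) with hf1def
  set f2 : ℝ → ℝ := fun x => pd1 (pd1 u) (x, 0) with hf2def
  -- membership helper
  have hmem : ∀ x ∈ I, ((x, (0 : ℝ)) : ℝ × ℝ) ∈ {p : ℝ × ℝ | |p.1| < R} := by
    intro x hx
    exact abs_lt.mpr ⟨hx.1, hx.2⟩
  -- derivative of the line embedding
  have hL : ∀ x : ℝ, HasDerivAt (fun t : ℝ => ((t, 0) : ℝ × ℝ)) ((1 : ℝ), (0 : ℝ)) x := by
    intro x
    exact HasDerivAt.prodMk (hasDerivAt_id x) (hasDerivAt_const x 0)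
  -- smoothness facts
  have hCat : ∀ x ∈ I, ContDiffAt ℝ (⊤ : ℕ∞) u (x, 0) := by
    intro x hx
    exact hu.contDiffAt (hopen.mem_nhds (hmem x hx))
  have hpd1C : ∀ x ∈ I, ContDiffAt ℝ (⊤ : ℕ∞) (pd1 u) (x, 0) := by
    intro x hx
    have h := (hCat x hx).fderiv_right (m := (⊤ : ℕ∞)) (by simp)
    exact h.clm_apply contDiffAt_const
  -- f has derivative f1
  have hdf : ∀ x ∈ I, HasDerivAt (fun t : ℝ => u (t, 0)) (f1 x) x := by
    intro x hx
    have hud : DifferentiableAt ℝ u (x, 0) := (hCat x hx).differentiableAt (by simp)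
    exact hud.hasFDerivAt.comp_hasDerivAt x (hL x)
  -- f1 has derivative f2
  have hdf1 : ∀ x ∈ I, HasDerivAt f1 (f2 x) x := by
    intro x hx
    have hud : DifferentiableAt ℝ (pd1 u) (x, 0) := (hpd1C x hx).differentiableAt (by simp)
    exact hud.hasFDerivAt.comp_hasDerivAt x (hL x)
  -- pointwise bounds 0 < f2 < 1 + f1²
  have hbounds : ∀ x ∈ I, 0 < f2 x ∧ f2 x < 1 + (f1 x) ^ 2 := by
    intro x hx
    have hH := hHess (x, 0) (hmem x hx)
    have hS := hSol (x, 0) (hmem x hx)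
    exact alg_key _ _ _ _ _ hH hS
  -- f1 is strictly monotone on I
  have hf1cont : ContinuousOn f1 I := fun x hx => (hdf1 x hx).continuousAt.continuousWithinAt
  have hf1mono : StrictMonoOn f1 I := by
    apply strictMonoOn_of_deriv_pos (convex_Ioo _ _) hf1cont
    intro x hx
    rw [interior_Ioo] at hx
    rw [(hdf1 x hx).deriv]
    exact (hbounds x hx).1
  -- g = arctan ∘ f1
  set g : ℝ → ℝ := fun x => arctan (f1 x) with hgdef
  have hdg : ∀ x ∈ I, HasDerivAt g (1 / (1 + (f1 x) ^ 2) * f2 x) x := by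
    intro x hx
    exact (Real.hasDerivAt_arctan (f1 x)).comp x (hdf1 x hx)
  -- φ = id - g is strictly monotone on I
  set φ : ℝ → ℝ := fun x => x - g x with hφdef
  have hφmono : StrictMonoOn φ I := by
    apply strictMonoOn_of_deriv_pos (convex_Ioo _ _)
    · intro x hx
      exact ((hasDerivAt_id x).sub (hdg x hx)).continuousAt.continuousWithinAt
    · intro x hx
      rw [interior_Ioo] at hx
      have hd : HasDerivAt φ (1 - 1 / (1 + (f1 x) ^ 2) * f2 x) x :=
        (hasDerivAt_id x).sub (hdg x hx)
      rw [hd.deriv]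
      have h1 : (0 : ℝ) < 1 + (f1 x) ^ 2 := by positivity
      have h2 := (hbounds x hx).2
      have : 1 / (1 + (f1 x) ^ 2) * f2 x < 1 := by
        rw [div_mul_eq_mul_div, one_mul, div_lt_one h1]
        exact h2
      linarith
  -- f1 → atTop as x → R⁻
  have hf1Top : Tendsto f1 (nhdsWithin R (Set.Iio R)) atTop := by
    rw [tendsto_atTop]
    intro M
    -- there is x₀ ∈ I with M ≤ f1 x₀
    have hex : ∃ x₀ ∈ I, M ≤ f1 x₀ := by
      by_contra hcon
      push_neg at hcon
      -- then u(x,0) - Mx is antitone on [0,R)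
      have hanti : AntitoneOn (fun x => u (x, 0) - M * x) (Set.Ico 0 R) := by
        have hsub : Set.Ico (0 : ℝ) R ⊆ I := fun x hx => ⟨lt_of_lt_of_le (neg_lt_zero.mpr hR) hx.1, hx.2⟩
        have hint : interior (Set.Ico (0 : ℝ) R) = Set.Ioo 0 R := interior_Ico
        apply antitoneOn_of_deriv_nonpos (convex_Ico _ _)
        · intro x hx
          exact ((hdf x (hsub hx)).sub ((hasDerivAt_id x).const_mul M)).continuousAt.continuousWithinAt
        · intro x hx
          rw [hint] at hx
          have hxI : x ∈ I := hsub ⟨hx.1.le, hx.2⟩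
          exact ((hdf x hxI).sub (by simpa using (hasDerivAt_id x).const_mul M)).differentiableAt.differentiableWithinAt
        · intro x hx
          rw [hint] at hx
          have hxI : x ∈ I := hsub ⟨hx.1.le, hx.2⟩
          rw [((hdf x hxI).fun_sub (by simpa using (hasDerivAt_id x).const_mul M)).deriv]
          have := hcon x hxI
          linarith
      -- so u(x,0) is bounded on [0,R), contradicting blow-up
      have hbound : ∀ x ∈ Set.Ico (0 : ℝ) R, u (x, 0) ≤ u (0, 0) + |M| * R := by
        intro x hx
        have h0 : (0 : ℝ) ∈ Set.Ico (0 : ℝ) R := ⟨le_refl _, hR⟩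
        have := hanti h0 hx hx.1
        simp only [mul_zero, sub_zero] at this
        have hMx : M * x ≤ |M| * R := by
          calc M * x ≤ |M * x| := le_abs_self _
            _ = |M| * |x| := abs_mul _ _
            _ ≤ |M| * R := by
                apply mul_le_mul_of_nonneg_left _ (abs_nonneg _)
                rw [abs_of_nonneg hx.1]
                exact hx.2.le
        linarith
      have hev1 : ∀ᶠ x in nhdsWithin R (Set.Iio R), u (x, 0) > u (0, 0) + |M| * R :=
        (hTop 0).eventually_gt_atTop _
      have hev2 : ∀ᶠ x in nhdsWithin R (Set.Iio R), x ∈ Set.Ico (0 : ℝ) R := by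
        filter_upwards [inter_mem (mem_nhdsWithin_of_mem_nhds (Ioi_mem_nhds hR))
          self_mem_nhdsWithin] with x hx
        exact ⟨le_of_lt hx.1, hx.2⟩
      obtain ⟨x, hx1, hx2⟩ := (hev1.and hev2).exists
      exact absurd (hbound x hx2) (not_le.mpr hx1)
    obtain ⟨x₀, hx₀, hMx₀⟩ := hex
    filter_upwards [inter_mem (mem_nhdsWithin_of_mem_nhds (Ioi_mem_nhds hx₀.2))
      self_mem_nhdsWithin] with x hx
    have hxI : x ∈ I := ⟨lt_trans hx₀.1 hx.1, hx.2⟩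
    exact le_of_lt (lt_of_le_of_lt hMx₀ (hf1mono hx₀ hxI hx.1))
  -- f1 → atBot as x → (-R)⁺
  have hf1Bot : Tendsto f1 (nhdsWithin (-R) (Set.Ioi (-R))) atBot := by
    rw [tendsto_atBot]
    intro M
    have hex : ∃ x₀ ∈ I, f1 x₀ ≤ M := by
      by_contra hcon
      push_neg at hcon
      have hmono : MonotoneOn (fun x => u (x, 0) - M * x) (Set.Ioc (-R) 0) := by
        have hsub : Set.Ioc (-R) (0 : ℝ) ⊆ I := fun x hx => ⟨hx.1, lt_of_le_of_lt hx.2 hR⟩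
        have hint : interior (Set.Ioc (-R) (0 : ℝ)) = Set.Ioo (-R) 0 := interior_Ioc
        apply monotoneOn_of_deriv_nonneg (convex_Ioc _ _)
        · intro x hx
          exact ((hdf x (hsub hx)).sub ((hasDerivAt_id x).const_mul M)).continuousAt.continuousWithinAt
        · intro x hx
          rw [hint] at hx
          have hxI : x ∈ I := hsub ⟨hx.1, hx.2.le⟩
          exact ((hdf x hxI).sub (by simpa using (hasDerivAt_id x).const_mul M)).differentiableAt.differentiableWithinAt
        · intro x hx
          rw [hint] at hx
          have hxI : x ∈ I := hsub ⟨hx.1, hx.2.le⟩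
          rw [((hdf x hxI).fun_sub (by simpa using (hasDerivAt_id x).const_mul M)).deriv]
          have := hcon x hxI
          linarith
      have hbound : ∀ x ∈ Set.Ioc (-R) (0 : ℝ), u (x, 0) ≤ u (0, 0) + |M| * R := by
        intro x hx
        have h0 : (0 : ℝ) ∈ Set.Ioc (-R) (0 : ℝ) := ⟨neg_lt_zero.mpr hR, le_refl _⟩
        have := hmono hx h0 hx.2
        simp only [mul_zero, sub_zero] at this
        have hMx : M * x ≤ |M| * R := by
          calc M * x ≤ |M * x| := le_abs_self _
            _ = |M| * |x| := abs_mul _ _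
            _ ≤ |M| * R := by
                apply mul_le_mul_of_nonneg_left _ (abs_nonneg _)
                rw [abs_le]
                constructor <;> linarith [hx.1, hx.2]
        linarith
      have hev1 : ∀ᶠ x in nhdsWithin (-R) (Set.Ioi (-R)), u (x, 0) > u (0, 0) + |M| * R :=
        (hBot 0).eventually_gt_atTop _
      have hev2 : ∀ᶠ x in nhdsWithin (-R) (Set.Ioi (-R)), x ∈ Set.Ioc (-R) (0 : ℝ) := by
        filter_upwards [inter_mem (mem_nhdsWithin_of_mem_nhds (Iio_mem_nhds (neg_lt_zero.mpr hR)))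
          self_mem_nhdsWithin] with x hx
        exact ⟨hx.2, hx.1.le⟩
      obtain ⟨x, hx1, hx2⟩ := (hev1.and hev2).exists
      exact absurd (hbound x hx2) (not_le.mpr hx1)
    obtain ⟨x₀, hx₀, hMx₀⟩ := hex
    filter_upwards [inter_mem (mem_nhdsWithin_of_mem_nhds (Iio_mem_nhds hx₀.1))
      self_mem_nhdsWithin] with x hx
    have hxI : x ∈ I := ⟨hx.2, lt_trans hx.1 hx₀.2⟩
    exact le_of_lt (lt_of_lt_of_le (hf1mono hxI hx₀ hx.1) hMx₀)
  -- limits of g at the endpoints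
  have hgTop : Tendsto g (nhdsWithin R (Set.Iio R)) (nhds (π / 2)) :=
    (Real.tendsto_arctan_atTop.comp hf1Top).mono_right nhdsWithin_le_nhds
  have hgBot : Tendsto g (nhdsWithin (-R) (Set.Ioi (-R))) (nhds (-(π / 2))) :=
    (Real.tendsto_arctan_atBot.comp hf1Bot).mono_right nhdsWithin_le_nhds
  -- fixed interior points
  have haI : -(R / 2) ∈ I := ⟨by linarith, by linarith⟩
  have hbI : (R / 2) ∈ I := ⟨by linarith, by linarith⟩
  -- three inequalities
  have h1 : π / 2 ≤ g (R / 2) + (R - R / 2) := by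
    apply le_of_tendsto hgTop
    filter_upwards [inter_mem (mem_nhdsWithin_of_mem_nhds (Ioi_mem_nhds hbI.2))
      self_mem_nhdsWithin] with x hx
    have hxI : x ∈ I := ⟨lt_trans hbI.1 hx.1, hx.2⟩
    have := hφmono hbI hxI hx.1
    simp only [hφdef] at this
    have hxR : x < R := hx.2
    linarith
  have h2 : g (-(R / 2)) - R - (-(R / 2)) ≤ -(π / 2) := by
    apply ge_of_tendsto hgBot
    filter_upwards [inter_mem (mem_nhdsWithin_of_mem_nhds (Iio_mem_nhds haI.1))
      self_mem_nhdsWithin] with x hx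
    have hxI : x ∈ I := ⟨hx.2, lt_trans hx.1 haI.2⟩
    have := hφmono hxI haI hx.1
    simp only [hφdef] at this
    have hxR : -R < x := hx.2
    linarith
  have h3 : g (R / 2) - g (-(R / 2)) < R / 2 - (-(R / 2)) := by
    have := hφmono haI hbI (by linarith)
    simp only [hφdef] at this
    linarith
  linarith [h1, h2, h3, hR']
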